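/- arXiv:2202.03321 — 6 statements merged into one kernel-verified Lean document; each statement's English description precedes it below -/
import Mathlib

section
/- Let m, n ≥ 1 and let ρ, σ, τ be density matrices on ℂ^m⊗ℂ^n (matrices indexed by Fin m × Fin n) such that ρ = t·σ + (1−t)·τ for some real t with 0 < t < 1. If the minimal eigenvalue of the partial transpose ρ^{T_A} equals −1/2, then the minimal eigenvalue of σ^{T_A} equals −1/2 and the minimal eigenvalue of τ^{T_A} equals −1/2. -/
open Matrix Polynomial
open scoped ComplexOrder

noncomputable section

/-- Partial transpose on subsystem A of a bipartite matrix. -/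
def ptA {m n : ℕ} (ρ : Matrix (Fin m × Fin n) (Fin m × Fin n) ℂ) :
    Matrix (Fin m × Fin n) (Fin m × Fin n) ℂ :=
  fun p q => ρ (q.1, p.2) (p.1, q.2)

/-- A density matrix: positive semidefinite with trace one. -/
def IsDensityMatrix {k : Type*} [Fintype k] [DecidableEq k] (ρ : Matrix k k ℂ) : Prop :=
  ρ.PosSemidef ∧ ρ.trace = 1

open Classical in
/-- Minimal (real) eigenvalue of a Hermitian matrix (junk value 0 otherwise). -/
noncomputable def minEig {k : Type*} [Fintype k] [DecidableEq k] (A : Matrix k k ℂ) : ℝ :=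
  if h : A.IsHermitian then ⨅ i, h.eigenvalues i else 0

/-- The rank-one projection |ψ⟩⟨ψ| of a vector ψ. -/
def proj {k : Type*} [Fintype k] (ψ : k → ℂ) : Matrix k k ℂ :=
  Matrix.vecMulVec ψ (star ψ)

/-- A unit vector. -/
def IsUnitVec {k : Type*} [Fintype k] (ψ : k → ℂ) : Prop :=
  ∑ p, ‖ψ p‖ ^ 2 = 1

/-- Reduced matrix on subsystem A of a pure state ψ. -/
def reducedA {n : ℕ} (ψ : Fin n × Fin n → ℂ) : Matrix (Fin n) (Fin n) ℂ :=
  fun i k => ∑ j, ψ (i, j) * (starRingEnd ℂ) (ψ (k, j))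

/-- ψ is maximally entangled iff its reduced matrix is (1/n)·identity. -/
def MaxEntangled {n : ℕ} (ψ : Fin n × Fin n → ℂ) : Prop :=
  reducedA ψ = ((n : ℂ))⁻¹ • (1 : Matrix (Fin n) (Fin n) ℂ)

/-!
Write `H a b = ∑ i, x (i, a) * w (i, b)` for the contraction of two vectors `x, w` over
subsystem A. Then `⟨w, (|x⟩⟨x|)^{T_A} w⟩ = ∑ conj (H a b) * H b a`, which is at least
`-¼ ‖H - Hᵀ‖²` termwise. The matrix `H - Hᵀ` is the sum over `i` of the antisymmetric tensors
`x_i ∧ w_i` built from the rows of `x` and `w`; Lagrange's identity bounds `‖x_i ∧ w_i‖²` by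
`2 ‖x_i‖² ‖w_i‖²`, so the triangle and Cauchy–Schwarz inequalities give
`‖H - Hᵀ‖² ≤ 2 ‖x‖² ‖w‖²`. Hence `(|x⟩⟨x|)^{T_A} ≥ -½ ‖x‖²`, and writing a density matrix as a sum
of rank-one terms shows `λ_min(ρ^{T_A}) ≥ -1/2` for every state `ρ`. Finally `λ_min` is concave,
so `-1/2 = λ_min(ρ^{T_A}) ≥ t λ_min(σ^{T_A}) + (1 - t) λ_min(τ^{T_A}) ≥ -1/2` forces equality.
-/

open ComplexConjugate

section MinEig

variable {k : Type*} [Fintype k] [DecidableEq k]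

lemma IsDensityMatrix.nonempty {ρ : Matrix k k ℂ} (hρ : IsDensityMatrix ρ) : Nonempty k := by
  by_contra h
  rw [not_nonempty_iff] at h
  simpa [Matrix.trace] using hρ.2

open scoped MatrixOrder in
lemma le_minEig_iff [Nonempty k] {A : Matrix k k ℂ} (hA : A.IsHermitian) {c : ℝ} :
    c ≤ minEig A ↔ (A - c • 1).PosSemidef := by
  rw [minEig, dif_pos hA, le_ciInf_iff (Set.finite_range _).bddBelow, ← Set.forall_mem_range,
    ← hA.spectrum_real_eq_range_eigenvalues, ← algebraMap_le_iff_le_spectrum hA.isSelfAdjoint,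
    Matrix.le_iff, Algebra.algebraMap_eq_smul_one]

lemma mul_minEig_add_mul_minEig_le [Nonempty k] {A B : Matrix k k ℂ} (hA : A.IsHermitian)
    (hB : B.IsHermitian) {s t : ℝ} (hs : 0 ≤ s) (ht : 0 ≤ t) :
    s * minEig A + t * minEig B ≤ minEig ((s : ℂ) • A + (t : ℂ) • B) := by
  have hAB : ((s : ℂ) • A + (t : ℂ) • B).IsHermitian :=
    (hA.smul (Complex.conj_ofReal s)).add (hB.smul (Complex.conj_ofReal t))
  have hA' := ((le_minEig_iff hA).1 le_rfl).smul (Complex.zero_le_real.2 hs)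
  have hB' := ((le_minEig_iff hB).1 le_rfl).smul (Complex.zero_le_real.2 ht)
  rw [le_minEig_iff hAB]
  convert hA'.add hB' using 1
  module

end MinEig

lemma star_dotProduct_self_eq {k : Type*} [Fintype k] (v : k → ℂ) :
    star v ⬝ᵥ v = ((∑ p, ‖v p‖ ^ 2 : ℝ) : ℂ) := by
  simp [dotProduct, Complex.conj_mul']

lemma neg_norm_sq_sub_div_four_le_re (u v : ℂ) : -(‖u - v‖ ^ 2 / 4) ≤ (conj u * v).re := by
  have hsub := Complex.normSq_sub u v
  have hadd := Complex.normSq_add u v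
  have hre : (conj u * v).re = (u * conj v).re := by
    rw [← Complex.conj_re, map_mul, Complex.conj_conj, mul_comm]
  rw [← Complex.normSq_eq_norm_sq]
  linarith [Complex.normSq_nonneg (u + v)]

lemma sum_norm_sq_mul_sub_mul_le {κ : Type*} [Fintype κ] (y z : κ → ℂ) :
    ∑ a, ∑ b, ‖y a * z b - y b * z a‖ ^ 2 ≤ 2 * (∑ a, ‖y a‖ ^ 2) * ∑ b, ‖z b‖ ^ 2 := by
  set c := ∑ a, y a * conj (z a)
  have lagrange : ((∑ a, ∑ b, ‖y a * z b - y b * z a‖ ^ 2 : ℝ) : ℂ)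
      = ((2 * (∑ a, ‖y a‖ ^ 2) * ∑ b, ‖z b‖ ^ 2 - 2 * ‖c‖ ^ 2 : ℝ) : ℂ) := by
    push_cast
    simp only [← Complex.mul_conj', c, map_sum, map_sub, map_mul, Complex.conj_conj]
    have expand : ∀ a b,
        (y a * z b - y b * z a) * (conj (y a) * conj (z b) - conj (y b) * conj (z a))
          = y a * conj (y a) * (z b * conj (z b)) + y b * conj (y b) * (z a * conj (z a))
            - y a * conj (z a) * (conj (y b) * z b) - y b * conj (z b) * (conj (y a) * z a) := by
      intros
      ring
    simp only [expand, Finset.sum_add_distrib, Finset.sum_sub_distrib, ← Finset.mul_sum,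
      ← Finset.sum_mul]
    ring
  have lagrange_real : ∑ a, ∑ b, ‖y a * z b - y b * z a‖ ^ 2
      = 2 * (∑ a, ‖y a‖ ^ 2) * ∑ b, ‖z b‖ ^ 2 - 2 * ‖c‖ ^ 2 := by
    exact_mod_cast lagrange
  rw [lagrange_real]
  linarith [sq_nonneg ‖c‖]

section Contraction

variable {ι κ : Type*} [Fintype ι] [Fintype κ]

def contractA (x w : ι × κ → ℂ) : Matrix κ κ ℂ :=
  Matrix.of fun a b => ∑ i, x (i, a) * w (i, b)

lemma sum_norm_sq_contractA_sub_le (x w : ι × κ → ℂ) :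
    ∑ a, ∑ b, ‖contractA x w a b - contractA x w b a‖ ^ 2
      ≤ 2 * (∑ p, ‖x p‖ ^ 2) * ∑ p, ‖w p‖ ^ 2 := by
  let d : ι → EuclideanSpace ℂ (κ × κ) := fun i =>
    WithLp.toLp 2 fun ab => x (i, ab.1) * w (i, ab.2) - x (i, ab.2) * w (i, ab.1)
  have hsum : ∑ a, ∑ b, ‖contractA x w a b - contractA x w b a‖ ^ 2 = ‖∑ i, d i‖ ^ 2 := by
    simp [EuclideanSpace.norm_sq_eq, Fintype.sum_prod_type, d, contractA, Finset.sum_sub_distrib]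
  have hd : ∀ i, ‖d i‖ ^ 2 ≤ (2 * ∑ a, ‖x (i, a)‖ ^ 2) * ∑ b, ‖w (i, b)‖ ^ 2 := fun i => by
    simpa [EuclideanSpace.norm_sq_eq, Fintype.sum_prod_type, d, mul_assoc]
      using sum_norm_sq_mul_sub_mul_le (fun a => x (i, a)) (fun b => w (i, b))
  calc ∑ a, ∑ b, ‖contractA x w a b - contractA x w b a‖ ^ 2
      = ‖∑ i, d i‖ ^ 2 := hsum
    _ ≤ (∑ i, ‖d i‖) ^ 2 := by gcongr; exact norm_sum_le _ _
    _ ≤ (∑ i, 2 * ∑ a, ‖x (i, a)‖ ^ 2) * ∑ i, ∑ b, ‖w (i, b)‖ ^ 2 :=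
        Finset.sum_sq_le_sum_mul_sum_of_sq_le_mul _ (fun i _ => by positivity)
          (fun i _ => by positivity) (fun i _ => hd i)
    _ = 2 * (∑ p, ‖x p‖ ^ 2) * ∑ p, ‖w p‖ ^ 2 := by
        simp [Fintype.sum_prod_type, Finset.mul_sum]

end Contraction

section PartialTranspose

variable {m n : ℕ}

@[simp] lemma ptA_add (A B : Matrix (Fin m × Fin n) (Fin m × Fin n) ℂ) :
    ptA (A + B) = ptA A + ptA B := rfl

@[simp] lemma ptA_smul (c : ℂ) (A : Matrix (Fin m × Fin n) (Fin m × Fin n) ℂ) :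
    ptA (c • A) = c • ptA A := rfl

lemma ptA_sum {ι : Type*} (s : Finset ι) (A : ι → Matrix (Fin m × Fin n) (Fin m × Fin n) ℂ) :
    ptA (∑ i ∈ s, A i) = ∑ i ∈ s, ptA (A i) := by
  ext p q
  simp [ptA, Matrix.sum_apply]

lemma Matrix.IsHermitian.ptA {A : Matrix (Fin m × Fin n) (Fin m × Fin n) ℂ}
    (hA : A.IsHermitian) : (ptA A).IsHermitian := by
  ext p q
  simpa [_root_.ptA] using congrFun (congrFun hA (q.1, p.2)) (p.1, q.2)

lemma star_dotProduct_ptA_proj_mulVec (x w : Fin m × Fin n → ℂ) :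
    star w ⬝ᵥ ptA (proj x) *ᵥ w = ∑ a, ∑ b, conj (contractA x w a b) * contractA x w b a := by
  simp only [dotProduct, mulVec, ptA, proj, vecMulVec_apply, contractA, Matrix.of_apply, map_sum,
    Finset.mul_sum, Finset.sum_mul, Fintype.sum_prod_type, Pi.star_apply, RCLike.star_def, map_mul]
  conv_lhs => rw [Finset.sum_comm]
  conv_rhs => rw [Finset.sum_comm]
  refine Finset.sum_congr rfl fun b _ => ?_
  simp_rw [Finset.sum_comm (γ := Fin m) (α := Fin n)]
  refine Finset.sum_congr rfl fun a _ => ?_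
  rw [Finset.sum_comm]
  refine Finset.sum_congr rfl fun i _ => Finset.sum_congr rfl fun k _ => ?_
  ring

lemma neg_mul_div_two_le_re_star_dotProduct_ptA_proj_mulVec (x w : Fin m × Fin n → ℂ) :
    -((∑ p, ‖x p‖ ^ 2) * (∑ p, ‖w p‖ ^ 2) / 2) ≤ (star w ⬝ᵥ ptA (proj x) *ᵥ w).re := by
  rw [star_dotProduct_ptA_proj_mulVec, Complex.re_sum]
  calc -((∑ p, ‖x p‖ ^ 2) * (∑ p, ‖w p‖ ^ 2) / 2)
      ≤ -((∑ a, ∑ b, ‖contractA x w a b - contractA x w b a‖ ^ 2) / 4) := by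
        linarith [sum_norm_sq_contractA_sub_le x w]
    _ = ∑ a, ∑ b, -(‖contractA x w a b - contractA x w b a‖ ^ 2 / 4) := by
        simp only [Finset.sum_div, Finset.sum_neg_distrib]
    _ ≤ ∑ a, (∑ b, conj (contractA x w a b) * contractA x w b a).re := by
        simp only [Complex.re_sum]
        gcongr with a _ b _
        exact neg_norm_sq_sub_div_four_le_re _ _

lemma posSemidef_ptA_proj_add_smul_one (x : Fin m × Fin n → ℂ) :
    (ptA (proj x) + ((∑ p, ‖x p‖ ^ 2) / 2 : ℝ) • (1 : Matrix _ _ ℂ)).PosSemidef := by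
  have hherm : (ptA (proj x) + ((∑ p, ‖x p‖ ^ 2) / 2 : ℝ) • (1 : Matrix _ _ ℂ)).IsHermitian :=
    (posSemidef_vecMulVec_self_star x).isHermitian.ptA.add (isHermitian_one.smul rfl)
  refine .of_dotProduct_mulVec_nonneg hherm fun w => Complex.nonneg_iff.2 ⟨?_, ?_⟩
  · rw [add_mulVec, dotProduct_add, smul_mulVec, one_mulVec, dotProduct_smul, Complex.add_re,
      star_dotProduct_self_eq, Complex.real_smul, ← Complex.ofReal_mul, Complex.ofReal_re]
    linarith [neg_mul_div_two_le_re_star_dotProduct_ptA_proj_mulVec x w]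
  · exact (hherm.im_star_dotProduct_mulVec_self w).symm

lemma IsDensityMatrix.neg_half_le_minEig_ptA {ρ : Matrix (Fin m × Fin n) (Fin m × Fin n) ℂ}
    (hρ : IsDensityMatrix ρ) : -(1 / 2) ≤ minEig (ptA ρ) := by
  have := hρ.nonempty
  obtain ⟨r, v, hv⟩ := posSemidef_iff_eq_sum_vecMulVec.mp hρ.1
  have htrace : ∑ i, ∑ p, ‖v i p‖ ^ 2 = 1 := by
    have h := hρ.2
    rw [hv, trace_sum] at h
    simp only [trace_vecMulVec, dotProduct_comm (v _), star_dotProduct_self_eq] at h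
    exact_mod_cast h
  have hdecomp : ptA ρ - (-(1 / 2) : ℝ) • 1
      = ∑ i, (ptA (proj (v i)) + ((∑ p, ‖v i p‖ ^ 2) / 2 : ℝ) • (1 : Matrix _ _ ℂ)) := by
    rw [Finset.sum_add_distrib, ← Finset.sum_smul, ← Finset.sum_div, htrace, hv, ptA_sum]
    simp only [proj, sub_eq_add_neg, neg_smul, neg_neg]
  rw [le_minEig_iff hρ.1.isHermitian.ptA, hdecomp]
  exact posSemidef_sum _ fun i _ => posSemidef_ptA_proj_add_smul_one (v i)

end PartialTranspose

theorem stmt0_general (m n : ℕ)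
    (ρ σ τ : Matrix (Fin m × Fin n) (Fin m × Fin n) ℂ)
    (hσ : IsDensityMatrix σ) (hτ : IsDensityMatrix τ)
    (t : ℝ) (ht0 : 0 < t) (ht1 : t < 1)
    (hmix : ρ = (t : ℂ) • σ + ((1 - t : ℝ) : ℂ) • τ)
    (hmin : minEig (ptA ρ) = -(1/2)) :
    minEig (ptA σ) = -(1/2) ∧ minEig (ptA τ) = -(1/2) := by
  have := hσ.nonempty
  have hσ_ge := hσ.neg_half_le_minEig_ptA
  have hτ_ge := hτ.neg_half_le_minEig_ptA
  have hconcave := mul_minEig_add_mul_minEig_le hσ.1.isHermitian.ptA hτ.1.isHermitian.ptA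
    ht0.le (sub_nonneg.2 ht1.le)
  rw [← ptA_smul, ← ptA_smul, ← ptA_add, ← hmix, hmin] at hconcave
  constructor <;> nlinarith

theorem stmt0 (m n : ℕ) (hm : 1 ≤ m) (hn : 1 ≤ n)
    (ρ σ τ : Matrix (Fin m × Fin n) (Fin m × Fin n) ℂ)
    (hρ : IsDensityMatrix ρ) (hσ : IsDensityMatrix σ) (hτ : IsDensityMatrix τ)
    (t : ℝ) (ht0 : 0 < t) (ht1 : t < 1)
    (hmix : ρ = (t : ℂ) • σ + ((1 - t : ℝ) : ℂ) • τ)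
    (hmin : minEig (ptA ρ) = -(1/2)) :
    minEig (ptA σ) = -(1/2) ∧ minEig (ptA τ) = -(1/2) :=
  stmt0_general m n ρ σ τ hσ hτ t ht0 ht1 hmix hmin
end
end

section
/- Let d ≥ 1 and let σ : Fin d → ℝ be a family of nonnegative reals. Let F be the complex matrix indexed by Fin d × Fin d with entries F_{(a,b),(c,e)} = σ_a·σ_b if c = b and e = a, and 0 otherwise (F is the partial transpose of vec(Σ)vec(Σ)ᴴ for Σ = diag(σ)). Then the characteristic polynomial of F equals ∏_{i} (X − σ_i²) · ∏_{i<j} (X − σ_iσ_j)(X + σ_iσ_j); equivalently, the eigenvalues of F, with multiplicity, are σ_1², …, σ_d² together with ±σ_iσ_j for each pair i < j. -/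
/-!
Write `F = diagonal w * S`, where `S` is the permutation matrix of the swap `(a, b) ↦ (b, a)`
and `w (a, b) = σ a * σ b` is swap-invariant. With `s = -1` strictly below the diagonal and
`s = 1` elsewhere, the columns of `P = S + diagonal s` are eigenvectors of `F`: `2 e_(i,i)` for
`σ i ^ 2` and `e_(i,j) ± e_(j,i)` for `± σ i * σ j`. Since `P * P` is diagonal with entries `2`
and `4`, `P` is invertible and `F` is similar to `diagonal (s * w)`.
-/

open Matrix Polynomial
open scoped ComplexOrder

noncomputable section

open Finset

theorem Fintype.prod_prod_type_eq_prod_diag_mul_prod_lt {n M : Type*} [Fintype n] [LinearOrder n]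
    [CommMonoid M] (f : n × n → M) :
    ∏ p, f p =
      (∏ i, f (i, i)) * ∏ p ∈ univ.filter (fun p : n × n => p.1 < p.2), f p * f p.swap := by
  have hdiag : ∏ p ∈ univ.filter (fun p : n × n => p.1 = p.2), f p = ∏ i, f (i, i) := by
    rw [← prod_diag]
    congr 1
    ext ⟨a, b⟩
    simp
  have hgt : ∏ p ∈ univ.filter (fun p : n × n => p.1 < p.2), f p.swap =
      ∏ p ∈ univ.filter (fun p : n × n => p.2 < p.1), f p :=
    Finset.prod_equiv (Equiv.prodComm n n) (by simp) (by simp)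
  have hoff : univ.filter (fun p : n × n => ¬p.1 = p.2) =
      univ.filter (fun p : n × n => p.1 < p.2) ∪ univ.filter (fun p : n × n => p.2 < p.1) := by
    ext p
    simpa only [mem_filter, mem_univ, true_and, mem_union] using ne_iff_lt_or_gt
  rw [prod_mul_distrib, ← hdiag, hgt, ← prod_union, ← hoff, prod_filter_mul_prod_filter_not]
  exact disjoint_filter.mpr fun p _ h => h.not_gt

namespace Matrix

variable {ι R : Type*} [Fintype ι] [DecidableEq ι]

theorem charpoly_eq_of_mul_eq_mul [CommRing R] {A B P : Matrix ι ι R} (hP : IsUnit P)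
    (h : A * P = P * B) : A.charpoly = B.charpoly := by
  obtain ⟨U, rfl⟩ := hP
  rw [← charpoly_units_conj' U A, Matrix.mul_assoc, h, ← Matrix.mul_assoc,
    nonsing_inv_mul _ ((isUnit_iff_isUnit_det _).mp U.isUnit), Matrix.one_mul]

theorem permMatrix_mul_diagonal [Semiring R] (τ : Equiv.Perm ι) (f : ι → R) :
    τ.permMatrix R * diagonal f = diagonal (f ∘ τ) * τ.permMatrix R := by
  ext i j
  rcases eq_or_ne (τ i) j with rfl | h <;> simp [*]

theorem diagonal_mul_permMatrix_of_eq_zero [Semiring R] (τ : Equiv.Perm ι) {f : ι → R}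
    (hf : ∀ i, τ i ≠ i → f i = 0) :
    diagonal f * τ.permMatrix R = diagonal f := by
  ext i j
  by_cases hi : τ i = i
  · simp [diagonal_apply, hi]
  · simp [hf i hi, diagonal_apply]

theorem permMatrix_mul_self_of_involutive [Semiring R] {τ : Equiv.Perm ι}
    (hτ : Function.Involutive τ) : τ.permMatrix R * τ.permMatrix R = 1 := by
  rw [← permMatrix_mul, show τ * τ = 1 from Equiv.ext hτ, permMatrix_one]

theorem diagonal_mul_permMatrix_mul_permMatrix_add_diagonal [CommRing R] {τ : Equiv.Perm ι}
    (hτ : Function.Involutive τ) {w s : ι → R} (hw : ∀ i, w (τ i) = w i)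
    (hs_sq : ∀ i, s i * s i = 1) :
    diagonal w * τ.permMatrix R * (τ.permMatrix R + diagonal s) =
      (τ.permMatrix R + diagonal s) * diagonal (s * w) := by
  simp only [Matrix.mul_add, Matrix.add_mul, Matrix.mul_assoc,
    permMatrix_mul_self_of_involutive hτ, permMatrix_mul_diagonal,
    ← Matrix.mul_assoc (diagonal _), diagonal_mul_diagonal, Matrix.mul_one]
  rw [add_comm]
  congr 3
  · funext i
    simp only [Function.comp_apply, Pi.mul_apply, hw]
    ring
  · funext i
    rw [Pi.mul_apply, ← mul_assoc, hs_sq, one_mul]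

theorem permMatrix_add_diagonal_mul_self [CommRing R] {τ : Equiv.Perm ι}
    (hτ : Function.Involutive τ) {s : ι → R} (hs_sq : ∀ i, s i * s i = 1)
    (hs_swap : ∀ i, τ i ≠ i → s (τ i) = -s i) :
    (τ.permMatrix R + diagonal s) * (τ.permMatrix R + diagonal s) =
      diagonal fun i => 2 + (s (τ i) + s i) := by
  have hfix : (diagonal fun i => s (τ i) + s i) * τ.permMatrix R =
      diagonal fun i => s (τ i) + s i :=
    diagonal_mul_permMatrix_of_eq_zero τ fun i hi => by simp [hs_swap i hi]
  calc _ = (diagonal fun i => s i * s i) + 1 +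
        (diagonal (s ∘ τ) + diagonal s) * τ.permMatrix R := by
        simp only [Matrix.mul_add, Matrix.add_mul, permMatrix_mul_self_of_involutive hτ,
          permMatrix_mul_diagonal, diagonal_mul_diagonal]
        abel
    _ = diagonal fun i => 2 + (s (τ i) + s i) := by
        simp only [diagonal_add, Function.comp_apply, hfix, hs_sq, ← diagonal_one]
        norm_num

variable {K : Type*} [Field K] [NeZero (2 : K)]

theorem isUnit_permMatrix_add_diagonal {τ : Equiv.Perm ι} (hτ : Function.Involutive τ)
    {s : ι → K} (hs_sq : ∀ i, s i * s i = 1)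
    (hs_fix : ∀ i, τ i = i → s i = 1) (hs_swap : ∀ i, τ i ≠ i → s (τ i) = -s i) :
    IsUnit (τ.permMatrix K + diagonal s) := by
  refine isUnit_of_mul_isUnit_left (y := τ.permMatrix K + diagonal s) ?_
  rw [permMatrix_add_diagonal_mul_self hτ hs_sq hs_swap, isUnit_diagonal, Pi.isUnit_iff]
  refine fun i => IsUnit.mk0 _ ?_
  by_cases hi : τ i = i
  · rw [hi, hs_fix i hi, show (2 : K) + (1 + 1) = 2 * 2 by ring]
    exact mul_ne_zero two_ne_zero two_ne_zero
  · rw [hs_swap i hi, neg_add_cancel, add_zero]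
    exact two_ne_zero

theorem charpoly_diagonal_mul_permMatrix_of_involutive {τ : Equiv.Perm ι}
    (hτ : Function.Involutive τ) {w s : ι → K} (hw : ∀ i, w (τ i) = w i)
    (hs_sq : ∀ i, s i * s i = 1) (hs_fix : ∀ i, τ i = i → s i = 1)
    (hs_swap : ∀ i, τ i ≠ i → s (τ i) = -s i) :
    (diagonal w * τ.permMatrix K).charpoly = ∏ i, (X - C (s i * w i)) := by
  rw [charpoly_eq_of_mul_eq_mul (isUnit_permMatrix_add_diagonal hτ hs_sq hs_fix hs_swap)
    (diagonal_mul_permMatrix_mul_permMatrix_add_diagonal hτ hw hs_sq), charpoly_diagonal]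
  rfl

theorem charpoly_diagonal_mul_prodComm {n : Type*} [Fintype n] [LinearOrder n] (σ : n → K) :
    (diagonal (fun p : n × n => σ p.1 * σ p.2) *
        Equiv.Perm.permMatrix K (Equiv.prodComm n n)).charpoly =
      (∏ i, (X - C (σ i ^ 2))) *
        ∏ p ∈ univ.filter (fun p : n × n => p.1 < p.2),
          ((X - C (σ p.1 * σ p.2)) * (X + C (σ p.1 * σ p.2))) := by
  rw [charpoly_diagonal_mul_permMatrix_of_involutive (τ := Equiv.prodComm n n)
      (s := fun p => if p.2 < p.1 then -1 else 1) Prod.swap_swap (fun p => mul_comm _ _),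
    Fintype.prod_prod_type_eq_prod_diag_mul_prod_lt]
  · congr 1
    · simp [sq]
    · refine prod_congr rfl fun p hp => ?_
      have hlt : p.1 < p.2 := (mem_filter.mp hp).2
      simp [hlt, hlt.not_gt, mul_comm]
  · intro p
    split_ifs <;> simp
  · intro p hp
    have h : p.2 = p.1 := congrArg Prod.fst hp
    simp [h]
  · rintro ⟨a, b⟩ hp
    have hab : a ≠ b := fun h => hp (by simp [h])
    rcases hab.lt_or_gt with h | h <;> simp [h, h.not_gt]

end Matrix

theorem stmt2_general (d : ℕ) (σ : Fin d → ℝ)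
    (F : Matrix (Fin d × Fin d) (Fin d × Fin d) ℂ)
    (hF : ∀ p q : Fin d × Fin d,
      F p q = if q.1 = p.2 ∧ q.2 = p.1 then ((σ p.1 * σ p.2 : ℝ) : ℂ) else 0) :
    F.charpoly =
      (∏ i : Fin d, (Polynomial.X - Polynomial.C ((σ i : ℂ) ^ 2))) *
        ∏ p ∈ Finset.univ.filter (fun p : Fin d × Fin d => p.1 < p.2),
          ((Polynomial.X - Polynomial.C ((σ p.1 : ℂ) * (σ p.2 : ℂ))) *
            (Polynomial.X + Polynomial.C ((σ p.1 : ℂ) * (σ p.2 : ℂ)))) := by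
  have hF_eq : F = diagonal (fun p : Fin d × Fin d => (σ p.1 : ℂ) * σ p.2) *
      Equiv.Perm.permMatrix ℂ (Equiv.prodComm (Fin d) (Fin d)) := by
    ext p q
    rw [hF, diagonal_mul]
    simp [Prod.ext_iff, eq_comm, and_comm]
  rw [hF_eq]
  exact charpoly_diagonal_mul_prodComm (fun i => (σ i : ℂ))

theorem stmt2 (d : ℕ) (hd : 1 ≤ d) (σ : Fin d → ℝ) (hσ : ∀ i, 0 ≤ σ i)
    (F : Matrix (Fin d × Fin d) (Fin d × Fin d) ℂ)
    (hF : ∀ p q : Fin d × Fin d,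
      F p q = if q.1 = p.2 ∧ q.2 = p.1 then ((σ p.1 * σ p.2 : ℝ) : ℂ) else 0) :
    F.charpoly =
      (∏ i : Fin d, (Polynomial.X - Polynomial.C ((σ i : ℂ) ^ 2))) *
        ∏ p ∈ Finset.univ.filter (fun p : Fin d × Fin d => p.1 < p.2),
          ((Polynomial.X - Polynomial.C ((σ p.1 : ℂ) * (σ p.2 : ℂ))) *
            (Polynomial.X + Polynomial.C ((σ p.1 : ℂ) * (σ p.2 : ℂ)))) :=
  stmt2_general d σ F hF
end
end

section
/- Let ψ : Fin 2 × Fin 2 → ℂ be a unit vector (a pure two-qubit state). Then the minimal eigenvalue of the partial transpose (ψψᴴ)^{T_A} equals −1/2 if and only if ψ is maximally entangled, i.e. its reduced matrix R, defined by R_{i,k} = Σ_j ψ(i,j)·conj(ψ(k,j)), equals (1/2) times the 2×2 identity matrix. -/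
open Matrix Polynomial
open scoped ComplexOrder

noncomputable section

/-
Write `R` for the reduced matrix of `ψ`. A 4 × 4 determinant expansion shows that the
characteristic polynomial of `(ψψᴴ)^{T_A}` is `charpoly R · (X² - det R)`, so its eigenvalues are
the two eigenvalues of `R` (which lie in `[0, 1]`, as `R ≥ 0` and `tr R = 1`) together with
`±√(det R)`. Hence the minimal eigenvalue is `-√(det R)`, and it equals `-1/2` iff
`det R = 1/4 = (tr R / 2)²`. For a Hermitian 2 × 2 matrix, `(tr R)² - 4 det R` is the sum of squares
`(R₀₀ - R₁₁)² + 4 |R₀₁|²`, which vanishes exactly when `R` is scalar.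
-/

section Spectrum

variable {k : Type*} [Fintype k] [DecidableEq k] {A : Matrix k k ℂ}

theorem Matrix.IsHermitian.range_eigenvalues_eq (hA : A.IsHermitian) :
    Set.range hA.eigenvalues = {μ : ℝ | A.charpoly.eval (μ : ℂ) = 0} := by
  ext μ
  simp only [Set.mem_range, Set.mem_ofPred_eq, hA.charpoly_eq, eval_prod, eval_sub, eval_X, eval_C,
    Finset.prod_eq_zero_iff, Finset.mem_univ, true_and, sub_eq_zero]
  exact exists_congr fun _ => by rw [eq_comm]; exact RCLike.ofReal_inj.symm

theorem minEig_eq_of_isLeast (hA : A.IsHermitian) {m : ℝ}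
    (h : IsLeast (Set.range hA.eigenvalues) m) : minEig A = m := by
  obtain ⟨⟨i, rfl⟩, hle⟩ := h
  have : Nonempty k := ⟨i⟩
  rw [minEig, dif_pos hA]
  exact le_antisymm (ciInf_le (Finite.bddBelow_range _) i) (le_ciInf fun j => hle ⟨j, rfl⟩)

end Spectrum

theorem Matrix.IsHermitian.eq_smul_one_iff_trace_sq_eq {A : Matrix (Fin 2) (Fin 2) ℂ}
    (hA : A.IsHermitian) : A = (A.trace / 2) • 1 ↔ A.trace ^ 2 = 4 * A.det := by
  have hA10 : A 1 0 = star (A 0 1) := (congrFun (congrFun hA 1) 0).symm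
  obtain ⟨x, hx⟩ : ∃ x : ℝ, A 0 0 - A 1 1 = x := by
    refine ⟨(A 0 0 - A 1 1).re, (Complex.conj_eq_iff_re.mp ?_).symm⟩
    have hdiag (i : Fin 2) : star (A i i) = A i i := congrFun (congrFun hA i) i
    rw [map_sub, ← Complex.star_def, hdiag, hdiag]
  have hdisc : A.trace ^ 2 - 4 * A.det = ((x ^ 2 + 4 * Complex.normSq (A 0 1) : ℝ) : ℂ) := by
    rw [trace_fin_two, det_fin_two, hA10, Complex.star_def]
    push_cast
    rw [← hx, Complex.mul_conj]
    ring
  have hdisc_eq_zero : A.trace ^ 2 = 4 * A.det ↔ x = 0 ∧ A 0 1 = 0 := by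
    rw [← sub_eq_zero, hdisc, Complex.ofReal_eq_zero, ← Complex.normSq_eq_zero]
    constructor
    · intro h
      constructor <;> nlinarith [sq_nonneg x, Complex.normSq_nonneg (A 0 1)]
    · rintro ⟨rfl, h⟩
      simp [h]
  rw [hdisc_eq_zero, ← Complex.ofReal_eq_zero, ← hx, sub_eq_zero, ← Matrix.ext_iff]
  simp only [Fin.forall_fin_two, smul_apply, one_apply_eq, one_apply_ne, ne_eq, trace_fin_two,
    hA10, smul_eq_mul, mul_one, mul_zero, star_eq_zero, zero_ne_one, one_ne_zero, not_false_eq_true]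
  constructor
  · rintro ⟨⟨h00, h01⟩, -, -⟩
    exact ⟨by linear_combination 2 * h00, h01⟩
  · rintro ⟨h00, h01⟩
    exact ⟨⟨by rw [h00]; ring, h01⟩, h01, by rw [h00]; ring⟩

theorem isLeast_zeros_quartic {t : ℝ} (ht : 0 ≤ t) :
    IsLeast {μ : ℝ | (μ ^ 2 - μ + t) * (μ ^ 2 - t) = 0} (-√t) := by
  have hsq := Real.sq_sqrt ht
  refine ⟨by simp [hsq], fun μ hμ => ?_⟩
  rcases mul_eq_zero.mp hμ with h | h <;> nlinarith [Real.sqrt_nonneg t]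

theorem isHermitian_ptA {m n : ℕ} {ρ : Matrix (Fin m × Fin n) (Fin m × Fin n) ℂ}
    (hρ : ρ.IsHermitian) : (ptA ρ).IsHermitian := by
  ext p q
  simpa [ptA] using congrFun (congrFun hρ (q.1, p.2)) (p.1, q.2)

section Reduced

variable {n : ℕ} (ψ : Fin n × Fin n → ℂ)

theorem reducedA_eq_mul_conjTranspose :
    reducedA ψ = of (Function.curry ψ) * (of (Function.curry ψ))ᴴ := by
  ext i k
  simp [reducedA, mul_apply]

theorem isHermitian_reducedA : (reducedA ψ).IsHermitian :=
  reducedA_eq_mul_conjTranspose ψ ▸ isHermitian_mul_conjTranspose_self _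

theorem trace_reducedA : (reducedA ψ).trace = ((∑ p, ‖ψ p‖ ^ 2 : ℝ) : ℂ) := by
  simp [reducedA, trace, Fintype.sum_prod_type, Complex.mul_conj, Complex.normSq_eq_norm_sq]

theorem det_reducedA : (reducedA ψ).det = ((‖(of (Function.curry ψ)).det‖ ^ 2 : ℝ) : ℂ) := by
  rw [reducedA_eq_mul_conjTranspose, det_mul, det_conjTranspose, Complex.star_def,
    Complex.mul_conj, Complex.normSq_eq_norm_sq]

end Reduced

theorem charpoly_ptA_proj (ψ : Fin 2 × Fin 2 → ℂ) :
    (ptA (proj ψ)).charpoly = (reducedA ψ).charpoly * (X ^ 2 - C (reducedA ψ).det) := by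
  refine Polynomial.funext fun μ => ?_
  rw [eval_mul, eval_charpoly, charpoly_fin_two,
    ← det_submatrix_equiv_self (finProdFinEquiv (m := 2) (n := 2)).symm]
  simp [det_succ_row_zero, Fin.sum_univ_succ, trace_fin_two, reducedA, ptA, proj, vecMulVec,
    finProdFinEquiv, Fin.divNat, Fin.modNat, Fin.succAbove, diagonal]
  ring

theorem stmt3 (ψ : Fin 2 × Fin 2 → ℂ) (hψ : IsUnitVec ψ) :
    minEig (ptA (proj ψ)) = -(1/2) ↔ MaxEntangled ψ := by
  set t := ‖(of (Function.curry ψ)).det‖ ^ 2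
  have htrace : (reducedA ψ).trace = 1 := by rw [trace_reducedA, hψ, Complex.ofReal_one]
  have hdet : (reducedA ψ).det = t := det_reducedA ψ
  have hM : (ptA (proj ψ)).IsHermitian :=
    isHermitian_ptA (posSemidef_vecMulVec_self_star ψ).isHermitian
  have hspec : Set.range hM.eigenvalues = {μ : ℝ | (μ ^ 2 - μ + t) * (μ ^ 2 - t) = 0} := by
    rw [hM.range_eigenvalues_eq, charpoly_ptA_proj, charpoly_fin_two, htrace, hdet]
    ext μ
    simp only [map_one, one_mul, eval_mul, eval_add, eval_sub, eval_pow, eval_X, eval_C,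
      mul_eq_zero, Set.mem_ofPred_eq]
    norm_cast
  rw [minEig_eq_of_isLeast hM (hspec ▸ isLeast_zeros_quartic (by positivity)), MaxEntangled,
    Nat.cast_ofNat, ← one_div, ← htrace, (isHermitian_reducedA ψ).eq_smul_one_iff_trace_sq_eq,
    htrace, hdet, neg_inj, Real.sqrt_eq_iff_mul_self_eq_of_pos (by norm_num)]
  norm_num
  norm_cast
  constructor <;> intro h <;> linarith
end
end

section
/- Let ρ be a density matrix on ℂ²⊗ℂ² (a two-qubit state). If the minimal eigenvalue of the partial transpose ρ^{T_A} equals −1/2, then the multiset of eigenvalues of ρ^{T_A} (with multiplicity) is exactly {1/2, 1/2, 1/2, −1/2}. -/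
/-!
Partial transposition preserves the trace and the trace of the square, so
`tr (ρ^{T_A})² = tr ρ² ≤ (tr ρ)² = 1`. Hence the eigenvalues `λ` of `ρ^{T_A}` satisfy `∑ λ = 1` and
`∑ λ² ≤ 1`. If one of them is `-1/2`, the other three sum to `3/2` while their squares sum to at
most `3/4 = 3 · (1/2)²`, and this equality case of Cauchy–Schwarz forces all three to be `1/2`.
-/

open Matrix Polynomial
open scoped ComplexOrder

noncomputable section

open Finset

namespace Matrix

variable {n 𝕜 : Type*} [Fintype n] [DecidableEq n] [RCLike 𝕜]

lemma trace_unitary_conj (U : unitaryGroup n 𝕜) (M : Matrix n n 𝕜) :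
    (U * M * star (U : Matrix n n 𝕜)).trace = M.trace := by
  rw [trace_mul_cycle, mem_unitaryGroup_iff'.mp U.2, Matrix.one_mul]

lemma IsHermitian.trace_mul_self_eq_sum_sq_eigenvalues {A : Matrix n n 𝕜} (hA : A.IsHermitian) :
    (A * A).trace = ∑ i, (hA.eigenvalues i : 𝕜) ^ 2 := by
  conv_lhs => rw [hA.spectral_theorem, ← map_mul, Unitary.conjStarAlgAut_apply,
    trace_unitary_conj, diagonal_mul_diagonal, trace_diagonal]
  simp [sq]

lemma PosSemidef.re_trace_mul_self_le {A : Matrix n n 𝕜} (hA : A.PosSemidef) :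
    RCLike.re (A * A).trace ≤ RCLike.re A.trace ^ 2 := by
  rw [hA.1.trace_mul_self_eq_sum_sq_eigenvalues, hA.1.trace_eq_sum_eigenvalues]
  simp only [map_sum, ← RCLike.ofReal_pow, RCLike.ofReal_re]
  exact sum_sq_le_sq_sum_of_nonneg fun i _ => hA.eigenvalues_nonneg i

lemma IsHermitian.exists_eigenvalues_eq_minEig [Nonempty n] {A : Matrix n n ℂ}
    (hA : A.IsHermitian) : ∃ i, hA.eigenvalues i = minEig A := by
  rw [minEig, dif_pos hA]
  exact exists_eq_ciInf_of_finite

end Matrix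

lemma trace_ptA {m n : ℕ} (ρ : Matrix (Fin m × Fin n) (Fin m × Fin n) ℂ) :
    (ptA ρ).trace = ρ.trace := rfl

lemma trace_ptA_mul_self {m n : ℕ} (ρ : Matrix (Fin m × Fin n) (Fin m × Fin n) ℂ) :
    (ptA ρ * ptA ρ).trace = (ρ * ρ).trace := by
  simp only [Matrix.trace, Matrix.diag, Matrix.mul_apply, ptA, ← sum_product']
  exact sum_nbij' (fun x => ((x.2.1, x.1.2), (x.1.1, x.2.2)))
    (fun x => ((x.2.1, x.1.2), (x.1.1, x.2.2))) (by simp) (by simp) (by simp) (by simp)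
    fun _ _ => rfl

lemma Finset.eq_of_sum_eq_of_sum_sq_le {ι : Type*} {s : Finset ι} {f : ι → ℝ} {c : ℝ}
    (hsum : ∑ j ∈ s, f j = #s * c) (hsq : ∑ j ∈ s, f j ^ 2 ≤ #s * c ^ 2) :
    ∀ j ∈ s, f j = c := by
  have hdev : ∑ j ∈ s, (f j - c) ^ 2 = 0 := by
    refine le_antisymm ?_ (sum_nonneg fun j _ => sq_nonneg _)
    have : ∑ j ∈ s, (f j - c) ^ 2 = ∑ j ∈ s, f j ^ 2 - 2 * c * ∑ j ∈ s, f j + #s * c ^ 2 := by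
      simp only [sub_sq, sum_add_distrib, sum_sub_distrib, ← sum_mul, ← mul_sum, sum_const,
        nsmul_eq_mul]
      ring
    rw [this, hsum]
    nlinarith
  intro j hj
  have := (sum_eq_zero_iff_of_nonneg fun j _ => sq_nonneg (f j - c)).mp hdev j hj
  exact sub_eq_zero.mp (pow_eq_zero_iff two_ne_zero |>.mp this)

lemma Finset.univ_val_map_eq_cons_replicate {ι α : Type*} [Fintype ι] [DecidableEq ι]
    {f : ι → α} {c : α} (i : ι) (hf : ∀ j ≠ i, f j = c) :
    univ.val.map f = f i ::ₘ Multiset.replicate (Fintype.card ι - 1) c := by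
  rw [← insert_erase (mem_univ i), insert_val_of_notMem (notMem_erase i _), Multiset.map_cons]
  congr 1
  refine Multiset.eq_replicate.mpr ⟨by simp, ?_⟩
  simp only [Multiset.mem_map, mem_val, mem_erase]
  rintro _ ⟨j, ⟨hj, -⟩, rfl⟩
  exact hf j hj

theorem stmt4 (ρ : Matrix (Fin 2 × Fin 2) (Fin 2 × Fin 2) ℂ) (hρ : IsDensityMatrix ρ)
    (hmin : minEig (ptA ρ) = -(1/2)) (h : (ptA ρ).IsHermitian) :
    Finset.univ.val.map h.eigenvalues = ({1/2, 1/2, 1/2, -(1/2)} : Multiset ℝ) := by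
  have hsum : ∑ i, h.eigenvalues i = 1 := by
    have htr := h.trace_eq_sum_eigenvalues
    rw [trace_ptA, hρ.2] at htr
    simpa using congrArg Complex.re htr.symm
  have hsq : ∑ i, h.eigenvalues i ^ 2 ≤ 1 := by
    have hpurity := hρ.1.re_trace_mul_self_le
    rw [← trace_ptA_mul_self, h.trace_mul_self_eq_sum_sq_eigenvalues, hρ.2] at hpurity
    simpa [← Complex.ofReal_pow] using hpurity
  obtain ⟨i, hi⟩ := h.exists_eigenvalues_eq_minEig
  rw [hmin] at hi
  have hcard : #(univ.erase i) = 3 := by simp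
  have hrest : ∀ j ∈ univ.erase i, h.eigenvalues j = 1 / 2 := by
    apply eq_of_sum_eq_of_sum_sq_le <;> rw [hcard] <;> push_cast
    · linarith [add_sum_erase univ h.eigenvalues (mem_univ i)]
    · nlinarith [add_sum_erase univ (h.eigenvalues · ^ 2) (mem_univ i)]
  rw [univ_val_map_eq_cons_replicate i fun j hj => hrest j (mem_erase.2 ⟨hj, mem_univ j⟩), hi]
  simp [Multiset.replicate_succ, Multiset.cons_swap]
  exact Multiset.pair_comm _ _
end
end

section
/- Let n ≥ 1 and let x : Fin (n²) → ℝ be a family of real numbers whose power sums satisfy Σ_i (x_i)^k = ((n+1) + (n−1)·(−1)^k) / (2·n^{k−1}) for every k = 1, …, n². Then the multiset {x_i : i ∈ Fin (n²)} consists of the value 1/n with multiplicity n(n+1)/2 and the value −1/n with multiplicity n(n−1)/2. -/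
open Matrix Polynomial
open scoped ComplexOrder

noncomputable section

/-!
Over a domain of characteristic zero, Newton's identities recover the elementary symmetric
functions `e₁, …, eₘ` of `m` numbers from their first `m` power sums (the division by `k` in
`k eₖ = ±∑ …` is where characteristic zero enters). These are the coefficients of the monic
polynomial `∏ (X - xᵢ)`, whose roots give back the multiset. It remains to check that the
multiset with `n(n+1)/2` copies of `1/n` and `n(n-1)/2` copies of `-1/n` has `n²` elements and
the prescribed power sums.
-/

open Finset

namespace Multiset

theorem exists_fin_univ_map_eq {α : Type*} (s : Multiset α) :
    ∃ (m : ℕ) (f : Fin m → α), univ.val.map f = s := by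
  obtain ⟨l, rfl⟩ := Quot.exists_rep s
  exact ⟨l.length, l.get, by rw [Fin.univ_val_map, List.ofFn_get]; rfl⟩

variable {R : Type*} [CommRing R]

theorem mul_esymm_eq_sum (s : Multiset R) (k : ℕ) :
    k * s.esymm k = (-1) ^ (k + 1) * ∑ a ∈ HasAntidiagonal.antidiagonal k with a.1 < k,
      (-1) ^ a.1 * s.esymm a.1 * (s.map (· ^ a.2)).sum := by
  obtain ⟨m, f, rfl⟩ := exists_fin_univ_map_eq s
  have h := congrArg (MvPolynomial.aeval f) (MvPolynomial.mul_esymm_eq_sum (Fin m) R k)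
  simp only [map_map, Function.comp_def, ← Finset.sum_eq_multiset_sum]
  simpa only [_root_.map_mul, _root_.map_pow, _root_.map_neg, _root_.map_one, map_natCast,
    map_sum, MvPolynomial.aeval_esymm_eq_multiset_esymm, MvPolynomial.psum,
    MvPolynomial.aeval_X] using h

variable [IsDomain R] [CharZero R]

theorem esymm_eq_of_sum_map_pow_eq {s t : Multiset R} {m : ℕ}
    (h : ∀ k, 1 ≤ k → k ≤ m → (s.map (· ^ k)).sum = (t.map (· ^ k)).sum) :
    ∀ k ≤ m, s.esymm k = t.esymm k := by
  intro k
  induction k using Nat.strong_induction_on with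
  | _ k ih =>
    intro hkm
    rcases Nat.eq_zero_or_pos k with rfl | hk
    · simp [esymm]
    refine mul_left_cancel₀ (Nat.cast_ne_zero.mpr hk.ne' : (k : R) ≠ 0) ?_
    rw [mul_esymm_eq_sum, mul_esymm_eq_sum]
    refine congrArg (_ * ·) (Finset.sum_congr rfl fun a ha => ?_)
    obtain ⟨hsum, hlt⟩ := Finset.mem_filter.mp ha
    rw [HasAntidiagonal.mem_antidiagonal] at hsum
    rw [ih a.1 hlt (by omega), h a.2 (by omega) (by omega)]

theorem eq_of_sum_map_pow_eq {s t : Multiset R} (hcard : card s = card t)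
    (h : ∀ k, 1 ≤ k → k ≤ card s → (s.map (· ^ k)).sum = (t.map (· ^ k)).sum) :
    s = t := by
  have hesymm := esymm_eq_of_sum_map_pow_eq h
  have hprod : (s.map fun r => Polynomial.X - Polynomial.C r).prod
      = (t.map fun r => Polynomial.X - Polynomial.C r).prod := by
    rw [prod_X_sub_X_eq_sum_esymm, prod_X_sub_X_eq_sum_esymm, ← hcard]
    refine Finset.sum_congr rfl fun j hj => ?_
    rw [hesymm j (Nat.lt_succ_iff.mp (Finset.mem_range.mp hj))]
  simpa only [Polynomial.roots_multiset_prod_X_sub_C] using congrArg Polynomial.roots hprod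

end Multiset

theorem stmt10 (n : ℕ) (hn : 1 ≤ n) (x : Fin (n ^ 2) → ℝ)
    (hpow : ∀ k : ℕ, 1 ≤ k → k ≤ n ^ 2 →
      ∑ i, x i ^ k = (((n : ℝ) + 1) + ((n : ℝ) - 1) * (-1) ^ k) / (2 * (n : ℝ) ^ (k - 1))) :
    Finset.univ.val.map x =
      Multiset.replicate (n * (n + 1) / 2) ((n : ℝ))⁻¹ +
        Multiset.replicate (n * (n - 1) / 2) (-((n : ℝ))⁻¹) := by
  have hplus : ((n * (n + 1) / 2 : ℕ) : ℝ) = n * (n + 1) / 2 := by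
    rw [Nat.cast_div_charZero (Nat.even_mul_succ_self n).two_dvd]
    push_cast
    ring
  have hminus : ((n * (n - 1) / 2 : ℕ) : ℝ) = n * (n - 1) / 2 := by
    rw [Nat.cast_div_charZero (Nat.even_mul_pred_self n).two_dvd, Nat.cast_mul, Nat.cast_sub hn]
    norm_num
  have hcard : n * (n + 1) / 2 + n * (n - 1) / 2 = n ^ 2 := by
    exact_mod_cast (by rw [Nat.cast_add, hplus, hminus]; ring :
      ((n * (n + 1) / 2 + n * (n - 1) / 2 : ℕ) : ℝ) = n ^ 2)
  refine Multiset.eq_of_sum_map_pow_eq (by simp [hcard]) fun k hk1 hk2 => ?_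
  obtain ⟨j, rfl⟩ := Nat.exists_eq_add_of_le' hk1
  rw [Multiset.map_map, Function.comp_def, ← Finset.sum_eq_multiset_sum,
    hpow _ hk1 (by simpa using hk2), Nat.add_sub_cancel]
  simp only [Multiset.map_add, Multiset.map_replicate, Multiset.sum_add, Multiset.sum_replicate,
    nsmul_eq_mul, hplus, hminus, neg_pow (n : ℝ)⁻¹, inv_pow]
  field_simp
  ring
end
end

section
/- Let x : Fin 9 → ℝ be real numbers whose power sums satisfy Σ_i x_i = 1, Σ_i x_i² = 1, Σ_i x_i³ = 1/9, Σ_i x_i⁴ = 1/9, Σ_i x_i⁵ = 1/81, Σ_i x_i⁶ = 1/81, Σ_i x_i⁷ = 1/729, Σ_i x_i⁸ = 1/729, and Σ_i x_i⁹ = 1/6561. Then the multiset {x_i : i ∈ Fin 9} consists of the value 1/3 with multiplicity 6 and the value −1/3 with multiplicity 3. -/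
open Matrix Polynomial
open scoped ComplexOrder

noncomputable section

/-!
Expanding, `∑ (x_i² - 1/9)² = ∑ x_i⁴ - (2/9) ∑ x_i² + 9/81 = 0`, so every `x_i` is `±1/3`.
If `k` of them equal `1/3`, then `∑ x_i = (k - (9 - k))/3 = 1` forces `k = 6`.
-/

theorem Finset.eq_of_sum_eq_of_sum_sq_eq {ι K : Type*} [Field K] [LinearOrder K]
    [IsStrictOrderedRing K] {s : Finset ι} {f : ι → K} {a : K}
    (h₁ : ∑ i ∈ s, f i = s.card * a) (h₂ : ∑ i ∈ s, f i ^ 2 = s.card * a ^ 2) :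
    ∀ i ∈ s, f i = a := by
  have hvar : ∑ i ∈ s, (f i - a) ^ 2 = 0 := by
    calc ∑ i ∈ s, (f i - a) ^ 2 = ∑ i ∈ s, (f i ^ 2 - 2 * a * f i + a ^ 2) :=
          Finset.sum_congr rfl fun i _ => by ring
      _ = ∑ i ∈ s, f i ^ 2 - 2 * a * ∑ i ∈ s, f i + s.card * a ^ 2 := by
          rw [Finset.sum_add_distrib, Finset.sum_sub_distrib, ← Finset.mul_sum,
            Finset.sum_const, nsmul_eq_mul]
      _ = 0 := by rw [h₁, h₂]; ring
  intro i hi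
  have := (Finset.sum_eq_zero_iff_of_nonneg fun j _ => sq_nonneg (f j - a)).1 hvar i hi
  exact sub_eq_zero.1 (pow_eq_zero_iff two_ne_zero |>.1 this)

theorem Multiset.eq_replicate_count_add_replicate_count {α : Type*} [DecidableEq α]
    {s : Multiset α} {a b : α} (hab : a ≠ b) (h : ∀ y ∈ s, y = a ∨ y = b) :
    s = replicate (s.count a) a + replicate (s.count b) b := by
  rw [← filter_eq' s a, ← filter_eq' s b]
  conv_lhs => rw [← filter_add_not (· = a) s]
  congr 1
  refine filter_congr fun y hy => ?_
  rcases h y hy with rfl | rfl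
  · simp [hab]
  · simp [Ne.symm hab]

theorem stmt15_general (x : Fin 9 → ℝ)
    (h1 : ∑ i, x i = 1) (h2 : ∑ i, x i ^ 2 = 1)
    (h4 : ∑ i, x i ^ 4 = 1/9) :
    Finset.univ.val.map x =
      Multiset.replicate 6 (1/3 : ℝ) + Multiset.replicate 3 (-(1/3) : ℝ) := by
  have hsq : ∀ i, x i ^ 2 = 1/9 := fun i =>
    Finset.eq_of_sum_eq_of_sum_sq_eq (f := fun i => x i ^ 2) (s := Finset.univ)
      (by simp [h2]) (by simp_rw [← pow_mul]; simp [h4]; norm_num) i (Finset.mem_univ i)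
  set s := Finset.univ.val.map x with hs_def
  have hmem : ∀ y ∈ s, y = 1/3 ∨ y = -(1/3) := by
    simp only [hs_def, Multiset.mem_map, Finset.mem_val, Finset.mem_univ, true_and]
    rintro _ ⟨i, rfl⟩
    exact (sq_eq_sq_iff_eq_or_eq_neg.1 (by rw [hsq i]; norm_num))
  have hs := Multiset.eq_replicate_count_add_replicate_count (by norm_num) hmem
  have hcard : s.count (1/3) + s.count (-(1/3)) = 9 := by
    simpa [hs_def] using congrArg Multiset.card hs.symm
  have hsum : (s.count (1/3) : ℝ) / 3 - s.count (-(1/3)) / 3 = 1 := by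
    have := congrArg Multiset.sum hs.symm
    simp only [Multiset.sum_add, Multiset.sum_replicate, nsmul_eq_mul, hs_def,
      Finset.sum_map_val, h1] at this
    linarith
  have hcount : s.count (1/3) = 6 ∧ s.count (-(1/3)) = 3 := by
    have hcard' : (s.count (1/3) : ℝ) + s.count (-(1/3)) = 9 := by exact_mod_cast hcard
    have h₁ : (s.count (1/3) : ℝ) = 6 := by linarith
    have h₂ : (s.count (-(1/3)) : ℝ) = 3 := by linarith
    exact ⟨by exact_mod_cast h₁, by exact_mod_cast h₂⟩
  rw [hs, hcount.1, hcount.2]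

theorem stmt15 (x : Fin 9 → ℝ)
    (h1 : ∑ i, x i = 1) (h2 : ∑ i, x i ^ 2 = 1)
    (h3 : ∑ i, x i ^ 3 = 1/9) (h4 : ∑ i, x i ^ 4 = 1/9)
    (h5 : ∑ i, x i ^ 5 = 1/81) (h6 : ∑ i, x i ^ 6 = 1/81)
    (h7 : ∑ i, x i ^ 7 = 1/729) (h8 : ∑ i, x i ^ 8 = 1/729)
    (h9 : ∑ i, x i ^ 9 = 1/6561) :
    Finset.univ.val.map x =
      Multiset.replicate 6 (1/3 : ℝ) + Multiset.replicate 3 (-(1/3) : ℝ) :=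
  stmt15_general x h1 h2 h4
end
end
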